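/- (Lemma 3.1, fixed point characterization.) Let (d*, z*) ∈ ℝ^{n×p} × ℝ^{n×p} and let x* be a minimizer over ℝ^{n×p} of x ↦ r(x) + ½‖x − z*‖²_{Λ⁻¹}. Then (d*, z*) is a fixed point of the NIDS iteration if and only if there exists q* ∈ ∂r(x*) such that d* + ∇s(x*) + q* = 0, (I − W)x* = 0, and z* = x* + Λ q*. -/

import Mathlib

open Matrix Filter Topology

noncomputable section

/-- Trace inner product `⟨x, y⟩ = tr(xᵀ y)` on `n × p` real matrices. -/
def iprod {n p : ℕ} (x y : Matrix (Fin n) (Fin p) ℝ) : ℝ := (xᵀ * y).trace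

/-- Weighted inner product `⟨x, y⟩_Q = tr(xᵀ Q y)`. -/
def iprodQ {n p : ℕ} (Q : Matrix (Fin n) (Fin n) ℝ) (x y : Matrix (Fin n) (Fin p) ℝ) : ℝ :=
  (xᵀ * Q * y).trace

/-- Weighted squared (semi)norm `‖x‖_Q² = tr(xᵀ Q x)`. -/
def nsq {n p : ℕ} (Q : Matrix (Fin n) (Fin n) ℝ) (x : Matrix (Fin n) (Fin p) ℝ) : ℝ :=
  iprodQ Q x x

/-- `∇s(x)`: the matrix whose `i`-th row is the gradient field `g i` applied to the `i`-th
row of `x`. -/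
def gradS {n p : ℕ} (g : Fin n → EuclideanSpace ℝ (Fin p) → EuclideanSpace ℝ (Fin p))
    (x : Matrix (Fin n) (Fin p) ℝ) : Matrix (Fin n) (Fin p) ℝ :=
  Matrix.of fun i => WithLp.equiv 2 (Fin p → ℝ) (g i ((WithLp.equiv 2 (Fin p → ℝ)).symm (x i)))

/-- `x ∈ range(A)`, i.e. `x = A y` for some `y ∈ ℝ^{n×p}`. -/
def InRange {n p : ℕ} (A : Matrix (Fin n) (Fin n) ℝ) (x : Matrix (Fin n) (Fin p) ℝ) : Prop :=
  ∃ y : Matrix (Fin n) (Fin p) ℝ, x = A * y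

/-- `B` is the Moore–Penrose pseudoinverse of `A`. -/
def IsMoorePenrose {n : ℕ} (A B : Matrix (Fin n) (Fin n) ℝ) : Prop :=
  A * B * A = A ∧ B * A * B = B ∧ (A * B)ᵀ = A * B ∧ (B * A)ᵀ = B * A

/-- `r(x) = Σᵢ rᵢ(xᵢ)` where `xᵢ` is the `i`-th row of `x`. -/
def rsum {n p : ℕ} (r : Fin n → (Fin p → ℝ) → ℝ) (x : Matrix (Fin n) (Fin p) ℝ) : ℝ :=
  ∑ i, r i (x i)

/-- `q ∈ ∂r(x)`: subgradient of `rsum r` at `x` w.r.t. the trace inner product. -/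
def IsSubgrad {n p : ℕ} (r : Fin n → (Fin p → ℝ) → ℝ) (x q : Matrix (Fin n) (Fin p) ℝ) : Prop :=
  ∀ y : Matrix (Fin n) (Fin p) ℝ, rsum r x + iprod q (y - x) ≤ rsum r y

/-- `t` is an eigenvalue of the real matrix `A`. -/
def IsEig {n : ℕ} (A : Matrix (Fin n) (Fin n) ℝ) (t : ℝ) : Prop :=
  ∃ v : Fin n → ℝ, v ≠ 0 ∧ A *ᵥ v = t • v

/-- The mixing matrix assumption: symmetry, null space of `I - W` is the span of the
all-ones vector, and `2I ≽ W + I ≻ 0`. -/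
def IsMixing {n : ℕ} (W : Matrix (Fin n) (Fin n) ℝ) : Prop :=
  Wᵀ = W ∧ (∀ v : Fin n → ℝ, (1 - W) *ᵥ v = 0 ↔ ∃ t : ℝ, v = fun _ => t) ∧
    (W + 1).PosDef ∧ ((2 : ℝ) • (1 : Matrix (Fin n) (Fin n) ℝ) - (W + 1)).PosSemidef

/-- `x` is a minimizer over `ℝ^{n×p}` of `u ↦ r(u) + ½‖u − z‖²_{Λ⁻¹}` where `Λ = diag α`. -/
def ProxMin {n p : ℕ} (r : Fin n → (Fin p → ℝ) → ℝ) (α : Fin n → ℝ)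
    (z x : Matrix (Fin n) (Fin p) ℝ) : Prop :=
  ∀ u : Matrix (Fin n) (Fin p) ℝ,
    rsum r x + 1 / 2 * nsq (Matrix.diagonal fun i => (α i)⁻¹) (x - z) ≤
      rsum r u + 1 / 2 * nsq (Matrix.diagonal fun i => (α i)⁻¹) (u - z)

/-- `(d, z)` is a fixed point of the NIDS iteration. -/
def NIDSFixed {n p : ℕ} (W : Matrix (Fin n) (Fin n) ℝ) (α : Fin n → ℝ) (c : ℝ)
    (g : Fin n → EuclideanSpace ℝ (Fin p) → EuclideanSpace ℝ (Fin p))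
    (r : Fin n → (Fin p → ℝ) → ℝ) (d z : Matrix (Fin n) (Fin p) ℝ) : Prop :=
  ∃ x : Matrix (Fin n) (Fin p) ℝ, ProxMin r α z x ∧
    d = d + c • ((1 - W) *
      ((2 : ℝ) • x - z - Matrix.diagonal α * gradS g x - Matrix.diagonal α * d)) ∧
    z = x - Matrix.diagonal α * gradS g x - Matrix.diagonal α * d

end

/-! The proximal point `x*` of `z*` satisfies the optimality condition `Λ⁻¹(z* − x*) ∈ ∂r(x*)`
(compare the prox objective at `x*` and at `x* + t(y − x*)`, use convexity of `r` and let `t → 0`),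
and it is unique: adding the optimality conditions of two prox points `x, x'` gives
`‖x − x'‖²_{Λ⁻¹} ≤ 0`. At a fixed point the `z`-update reads
`z* = x* − Λ(∇s(x*) + d*)`, which turns the argument of `I − W` in the `d`-update into `x*`; hence
the `d`-update is stationary iff `(I − W)x* = 0`, and `q* = Λ⁻¹(z* − x*) = −(d* + ∇s(x*))`. -/

open Set

section TraceInner

variable {n p : ℕ}

theorem iprod_mul_left (Q : Matrix (Fin n) (Fin n) ℝ) (a b : Matrix (Fin n) (Fin p) ℝ) :
    iprod (Q * a) b = iprodQ Qᵀ a b := by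
  rw [iprod, iprodQ, transpose_mul]

theorem iprodQ_neg_left (Q : Matrix (Fin n) (Fin n) ℝ) (a b : Matrix (Fin n) (Fin p) ℝ) :
    iprodQ Q (-a) b = -iprodQ Q a b := by
  simp [iprodQ]

theorem nsq_add_smul {Q : Matrix (Fin n) (Fin n) ℝ} (hQ : Q.IsSymm) (a b : Matrix (Fin n) (Fin p) ℝ)
    (t : ℝ) : nsq Q (a + t • b) = nsq Q a + 2 * t * iprodQ Q a b + t ^ 2 * nsq Q b := by
  have hba : iprodQ Q b a = iprodQ Q a b := by
    rw [iprodQ, iprodQ, ← trace_transpose, transpose_mul, transpose_mul, transpose_transpose, hQ.eq,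
      Matrix.mul_assoc]
  simp only [nsq, iprodQ, transpose_add, transpose_smul, Matrix.add_mul, Matrix.mul_add,
    Matrix.smul_mul, Matrix.mul_smul, trace_add, trace_smul, smul_eq_mul] at hba ⊢
  rw [hba]
  ring

theorem nsq_eq_sum_dotProduct (Q : Matrix (Fin n) (Fin n) ℝ) (v : Matrix (Fin n) (Fin p) ℝ) :
    nsq Q v = ∑ j, vᵀ j ⬝ᵥ Q *ᵥ vᵀ j := by
  simp only [nsq, iprodQ, trace, diag, mul_apply, dotProduct, mulVec, transpose_apply,
    Finset.mul_sum, Finset.sum_mul]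
  refine Finset.sum_congr rfl fun j _ => Finset.sum_comm.trans ?_
  simp only [mul_assoc]

theorem Matrix.PosDef.eq_zero_of_nsq_nonpos {Q : Matrix (Fin n) (Fin n) ℝ} (hQ : Q.PosDef)
    {v : Matrix (Fin n) (Fin p) ℝ} (h : nsq Q v ≤ 0) : v = 0 := by
  have hcol : ∀ j, 0 ≤ vᵀ j ⬝ᵥ Q *ᵥ vᵀ j := fun j => by
    simpa using hQ.posSemidef.dotProduct_mulVec_nonneg (vᵀ j)
  rw [nsq_eq_sum_dotProduct] at h
  have hzero := (Finset.sum_eq_zero_iff_of_nonneg fun j _ => hcol j).1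
    (le_antisymm h (Finset.sum_nonneg fun j _ => hcol j))
  rw [← transpose_eq_zero]
  ext j i
  by_contra hne
  have := hQ.dotProduct_mulVec_pos (x := vᵀ j) fun h0 => hne (congrFun h0 i)
  simp only [star_trivial] at this
  exact this.ne' (hzero j (Finset.mem_univ j))

end TraceInner

theorem nonpos_of_forall_le_mul {a b : ℝ} (h : ∀ t ∈ Ioc (0 : ℝ) 1, a ≤ t * b) : a ≤ 0 := by
  have hlim : Filter.Tendsto (fun t : ℝ => t * b) (𝓝[>] 0) (𝓝 0) :=
    ((continuous_mul_const b).tendsto' 0 0 (zero_mul b)).mono_left nhdsWithin_le_nhds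
  exact ge_of_tendsto hlim (Filter.mem_of_superset (Ioc_mem_nhdsGT one_pos) h)

section Prox

variable {n p : ℕ}

def IsProxPoint (f : Matrix (Fin n) (Fin p) ℝ → ℝ) (Q : Matrix (Fin n) (Fin n) ℝ)
    (z x : Matrix (Fin n) (Fin p) ℝ) : Prop :=
  ∀ u, f x + 1 / 2 * nsq Q (x - z) ≤ f u + 1 / 2 * nsq Q (u - z)

variable {f : Matrix (Fin n) (Fin p) ℝ → ℝ} {Q : Matrix (Fin n) (Fin n) ℝ}
  {z x : Matrix (Fin n) (Fin p) ℝ}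

theorem IsProxPoint.subgradient (hf : ConvexOn ℝ univ f) (hQ : Q.IsSymm)
    (hx : IsProxPoint f Q z x) (y : Matrix (Fin n) (Fin p) ℝ) :
    f x + iprod (Q * (z - x)) (y - x) ≤ f y := by
  rw [iprod_mul_left, hQ.eq, ← neg_sub, iprodQ_neg_left]
  -- minimality at `x + t • (y - x)` and convexity give the bound up to an error `O(t)`
  suffices f x - f y - iprodQ Q (x - z) (y - x) ≤ 0 by linarith
  refine nonpos_of_forall_le_mul (b := nsq Q (y - x) / 2) fun t ⟨ht0, ht1⟩ => ?_
  have hmin := hx (x + t • (y - x))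
  have hconv : f (x + t • (y - x)) ≤ (1 - t) * f x + t * f y := by
    have := hf.2 (mem_univ x) (mem_univ y) (sub_nonneg.2 ht1) ht0.le (by ring)
    rwa [show (1 - t) • x + t • y = x + t • (y - x) by module] at this
  rw [show x + t • (y - x) - z = (x - z) + t • (y - x) by abel, nsq_add_smul hQ] at hmin
  nlinarith

theorem IsProxPoint.unique (hf : ConvexOn ℝ univ f) (hQ : Q.PosDef) {x' : Matrix (Fin n) (Fin p) ℝ}
    (hx : IsProxPoint f Q z x) (hx' : IsProxPoint f Q z x') : x = x' := by
  have hQs : Q.IsSymm := isHermitian_iff_isSymm.1 hQ.isHermitian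
  have h := hx.subgradient hf hQs x'
  have h' := hx'.subgradient hf hQs x
  have hsum : iprod (Q * (z - x)) (x' - x) + iprod (Q * (z - x')) (x - x') = nsq Q (x' - x) := by
    simp only [iprod, nsq, iprodQ, ← trace_add, transpose_mul, hQs.eq]
    congr 1
    simp only [transpose_sub, Matrix.sub_mul, Matrix.mul_sub, Matrix.mul_assoc]
    abel
  exact (sub_eq_zero.1 (hQ.eq_zero_of_nsq_nonpos (by linarith))).symm

end Prox

theorem convexOn_rsum {n p : ℕ} {r : Fin n → (Fin p → ℝ) → ℝ} (hr : ∀ i, ConvexOn ℝ univ (r i)) :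
    ConvexOn ℝ univ (rsum r) := by
  refine ⟨convex_univ, fun x _ y _ a b ha hb hab => ?_⟩
  simp only [rsum, Finset.mul_sum, ← Finset.sum_add_distrib, smul_eq_mul]
  exact Finset.sum_le_sum fun i _ => (hr i).2 (mem_univ _) (mem_univ _) ha hb hab

theorem nids_step_fixed_iff {R m k : Type*} [Field R] [Fintype m] {A L : Matrix m m R}
    {x z g d : Matrix m k R} {c : R} (hc : c ≠ 0) :
    (d = d + c • (A * ((2 : R) • x - z - L * g - L * d)) ∧ z = x - L * g - L * d) ↔
      A * x = 0 ∧ z = x - L * g - L * d := by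
  refine and_congr_left fun hz => ?_
  rw [show (2 : R) • x - z - L * g - L * d = x by rw [hz]; module]
  simp [hc]

theorem nids_fixed_point_characterization_general
    {n p : ℕ}
    (W : Matrix (Fin n) (Fin n) ℝ)
    (α : Fin n → ℝ) (hα : ∀ i, 0 < α i) (c : ℝ) (hc : 0 < c)
    (g : Fin n → EuclideanSpace ℝ (Fin p) → EuclideanSpace ℝ (Fin p))
    (r : Fin n → (Fin p → ℝ) → ℝ) (hr : ∀ i, ConvexOn ℝ Set.univ (r i))
    (dstar zstar xstar : Matrix (Fin n) (Fin p) ℝ)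
    (hxstar : ProxMin r α zstar xstar) :
    NIDSFixed W α c g r dstar zstar ↔
      ∃ q : Matrix (Fin n) (Fin p) ℝ, IsSubgrad r xstar q ∧
        dstar + gradS g xstar + q = 0 ∧ (1 - W) * xstar = 0 ∧
        zstar = xstar + Matrix.diagonal α * q := by
  have hQ : (diagonal fun i => (α i)⁻¹).PosDef := PosDef.diagonal fun i => inv_pos.2 (hα i)
  have hQΛ : diagonal (fun i => (α i)⁻¹) * diagonal α = 1 := by
    rw [diagonal_mul_diagonal, ← diagonal_one]
    exact congrArg diagonal (funext fun i => inv_mul_cancel₀ (hα i).ne')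
  constructor
  · rintro ⟨x, hx, hstep⟩
    obtain rfl : x = xstar := IsProxPoint.unique (convexOn_rsum hr) hQ hx hxstar
    obtain ⟨hWx, hz⟩ := (nids_step_fixed_iff hc.ne').1 hstep
    have hzq : zstar = x + diagonal α * -(dstar + gradS g x) := by
      rw [hz, Matrix.mul_neg, Matrix.mul_add]
      abel
    refine ⟨-(dstar + gradS g x), fun y => ?_, by abel, hWx, hzq⟩
    have := IsProxPoint.subgradient (convexOn_rsum hr) (isSymm_diagonal _) hx y
    rwa [hzq, add_sub_cancel_left, ← Matrix.mul_assoc, hQΛ, Matrix.one_mul] at this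
  · rintro ⟨q, -, hq, hWx, hz⟩
    refine ⟨xstar, hxstar, (nids_step_fixed_iff hc.ne').2 ⟨hWx, ?_⟩⟩
    rw [hz, eq_neg_of_add_eq_zero_right hq, Matrix.mul_neg, Matrix.mul_add]
    abel

/-- Lemma 3.1: characterization of the fixed points of the NIDS iteration. -/
theorem nids_fixed_point_characterization
    {n p : ℕ}
    (W : Matrix (Fin n) (Fin n) ℝ) (hW : IsMixing W)
    (α : Fin n → ℝ) (hα : ∀ i, 0 < α i) (c : ℝ) (hc : 0 < c)
    (hcW : ((1 : Matrix (Fin n) (Fin n) ℝ) -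
      c • ((Matrix.diagonal fun i => Real.sqrt (α i)) * (1 - W) *
        Matrix.diagonal fun i => Real.sqrt (α i))).PosDef)
    (s : Fin n → EuclideanSpace ℝ (Fin p) → ℝ)
    (g : Fin n → EuclideanSpace ℝ (Fin p) → EuclideanSpace ℝ (Fin p))
    (hs : ∀ i, ConvexOn ℝ Set.univ (s i))
    (hg : ∀ i v, HasGradientAt (s i) (g i v) v)
    (r : Fin n → (Fin p → ℝ) → ℝ) (hr : ∀ i, ConvexOn ℝ Set.univ (r i))
    (dstar zstar xstar : Matrix (Fin n) (Fin p) ℝ)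
    (hxstar : ProxMin r α zstar xstar) :
    NIDSFixed W α c g r dstar zstar ↔
      ∃ q : Matrix (Fin n) (Fin p) ℝ, IsSubgrad r xstar q ∧
        dstar + gradS g xstar + q = 0 ∧ (1 - W) * xstar = 0 ∧
        zstar = xstar + Matrix.diagonal α * q :=
  nids_fixed_point_characterization_general W α hα c hc g r hr dstar zstar xstar hxstar
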